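/- Let N ≥ 2 be an integer, let c > 0 with p := c·ln N / N ≤ 1/2, let δ > 0, set A_δ := (1−ε)(1−e^{−2cδ})/2 and a := c(1−ε)(1−cδ), and let ε be a real number with 0 < ε ≤ A_δ/2 and e·ε·N^{1−a} ≤ 1. Then there exists an N×N matrix A over 𝔽₂ with at most 2cN·ln N nonzero entries such that, for G = [I | A] (the N×(2N) matrix whose first N columns form the identity and whose last N columns are the columns of A) and a random erasure pattern S ⊆ {1,…,2N} with each coordinate included independently with probability ε, the probability that there exists x ∈ 𝔽₂^N, x ≠ 0, confused with the zero vector under S is at most 2·[(1 − A_δ/2)^N + δ·e·ε·N^{2−a} / ln N]. -/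

import Mathlib

open scoped Classical

/-- `x₁` is *confused with* `x₂` under the erasure pattern `S`: the codewords
`x₁ᵀG` and `x₂ᵀG` agree on every coordinate outside `S`. -/
def Confused {n m : Type*} [Fintype n] (G : Matrix n m (ZMod 2))
    (x₁ x₂ : n → ZMod 2) (S : Finset m) : Prop :=
  ∀ j, j ∉ S → Matrix.vecMul x₁ G j = Matrix.vecMul x₂ G j

/-- Probability of an event `E` of erasure patterns when each coordinate is
erased independently with probability `ε`. -/
noncomputable def erasureProb {m : Type*} [Fintype m] (ε : ℝ)
    (E : Finset m → Prop) : ℝ :=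
  ∑ S : Finset m,
    if E S then ε ^ S.card * (1 - ε) ^ (Fintype.card m - S.card) else 0


/-!
Average over random matrices with i.i.d. Bernoulli(`p`) entries, `p = c log N / N`; the matrix is
drawn as the family `B` of its columns, so that the code is `[I | (of B)ᵀ]`. By the union bound the
block error probability is at most `∑_{x ≠ 0} ε^{|x|} ε^{|xA|}`. The coordinates of `xA` are
independent, and expanding `[s = 0]` through the character `(-1)^s` of `𝔽₂` shows that each is
nonzero with probability `(1 - (1 - 2p)^{|x|}) / 2`, so `𝔼 ε^{|xA|} = columnFactor ε p |x| ^ N`.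
Group the `x` by weight `w`. When `p w < c δ`, the bound `(1 - 2p)^w ≤ 1 - 2pw + 2(pw)²` and
`p N = c log N` make the term at most `(ε N^{1-a})^w ≤ ε N^{1-a}`, and there are at most
`δ N / log N` such `w`. When `p w ≥ c δ`, each column factor is at most `1 - A_δ`, and the binomial
theorem bounds these terms by `((1 + ε)(1 - A_δ))^N ≤ (1 - A_δ/2)^N`. Finally, the expected number
of ones is `p N² = c N log N`, so by Markov's inequality the matrices with at most `2 c N log N`
ones have probability at least `1/2`, and one of them has error probability at most twice the
expected bound.
-/

open Finset Matrix

section ProductMass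

variable {ι α : Type*} [Fintype ι] [DecidableEq ι] [Fintype α]

def productMass (μ : α → ℝ) (h : ι → α) : ℝ := ∏ i, μ (h i)

omit [DecidableEq ι] [Fintype α] in
lemma productMass_nonneg {μ : α → ℝ} (hμ : ∀ a, 0 ≤ μ a) (h : ι → α) : 0 ≤ productMass μ h :=
  prod_nonneg fun i _ => hμ (h i)

lemma sum_productMass_mul_prod (μ : α → ℝ) (F : ι → α → ℝ) :
    ∑ h : ι → α, productMass μ h * ∏ i, F i (h i) = ∏ i, ∑ a, μ a * F i a := by
  simp only [productMass, ← prod_mul_distrib]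
  exact (Fintype.prod_sum fun i a => μ a * F i a).symm

lemma sum_productMass {μ : α → ℝ} (hμ : ∑ a, μ a = 1) :
    ∑ h : ι → α, productMass μ h = 1 := by
  simpa [hμ] using sum_productMass_mul_prod (ι := ι) μ fun _ _ => 1

lemma sum_productMass_mul_apply {μ : α → ℝ} (hμ : ∑ a, μ a = 1) (i₀ : ι) (f : α → ℝ) :
    ∑ h : ι → α, productMass μ h * f (h i₀) = ∑ a, μ a * f a := by
  simpa [apply_ite, hμ] using sum_productMass_mul_prod μ fun i a => if i = i₀ then f a else 1

end ProductMass

section BernoulliBits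

lemma zmod_two_eq_zero_or_eq_one (b : ZMod 2) : b = 0 ∨ b = 1 := by
  revert b; decide

lemma sum_zmod_two {M : Type*} [AddCommMonoid M] (f : ZMod 2 → M) : ∑ b, f b = f 0 + f 1 :=
  Fin.sum_univ_two f

def bernoulliMass (p : ℝ) (b : ZMod 2) : ℝ := if b = 1 then p else 1 - p

lemma bernoulliMass_nonneg {p : ℝ} (hp0 : 0 ≤ p) (hp1 : p ≤ 1) (b : ZMod 2) :
    0 ≤ bernoulliMass p b := by
  unfold bernoulliMass; split <;> linarith

lemma sum_bernoulliMass (p : ℝ) : ∑ b, bernoulliMass p b = 1 := by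
  simp [bernoulliMass, sum_zmod_two]

def paritySign (b : ZMod 2) : ℝ := if b = 0 then 1 else -1

lemma paritySign_add (a b : ZMod 2) : paritySign (a + b) = paritySign a * paritySign b := by
  have h : (1 + 1 : ZMod 2) = 0 := rfl
  rcases zmod_two_eq_zero_or_eq_one a with rfl | rfl <;>
    rcases zmod_two_eq_zero_or_eq_one b with rfl | rfl <;> simp [paritySign, h]

lemma paritySign_sum {ι : Type*} (s : Finset ι) (f : ι → ZMod 2) :
    paritySign (∑ i ∈ s, f i) = ∏ i ∈ s, paritySign (f i) := by
  induction s using Finset.cons_induction with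
  | empty => simp [paritySign]
  | cons a s ha ih => rw [sum_cons, prod_cons, paritySign_add, ih]

lemma ite_eq_zero_eq_paritySign (ε : ℝ) (b : ZMod 2) :
    (if b = 0 then 1 else ε) = (1 + ε) / 2 + (1 - ε) / 2 * paritySign b := by
  unfold paritySign; split <;> ring

lemma sum_bernoulliMass_mul_paritySign_mul (p : ℝ) (a : ZMod 2) :
    ∑ b, bernoulliMass p b * paritySign (a * b) = if a = 0 then 1 else 1 - 2 * p := by
  rcases zmod_two_eq_zero_or_eq_one a with rfl | rfl <;>
    simp [bernoulliMass, paritySign, sum_zmod_two]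
  ring

end BernoulliBits

section RandomColumns

variable {n m : Type*} [Fintype n] [DecidableEq n] [Fintype m] [DecidableEq m]

lemma pow_hammingNorm {ι β : Type*} [Fintype ι] [DecidableEq β] [Zero β] (r : ℝ) (v : ι → β) :
    r ^ hammingNorm v = ∏ i, if v i = 0 then 1 else r := by
  rw [prod_ite, prod_const_one, one_mul, prod_const]
  rfl

noncomputable def columnFactor (ε p : ℝ) (w : ℕ) : ℝ := (1 + ε) / 2 + (1 - ε) / 2 * (1 - 2 * p) ^ w

lemma sum_productMass_mul_paritySign_dotProduct (p : ℝ) (x : n → ZMod 2) :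
    ∑ v : n → ZMod 2, productMass (bernoulliMass p) v * paritySign (x ⬝ᵥ v)
      = (1 - 2 * p) ^ hammingNorm x := by
  simp only [dotProduct, paritySign_sum]
  rw [sum_productMass_mul_prod _ fun i b => paritySign (x i * b), pow_hammingNorm]
  simp only [sum_bernoulliMass_mul_paritySign_mul]

lemma sum_productMass_mul_ite_dotProduct (ε p : ℝ) (x : n → ZMod 2) :
    ∑ v : n → ZMod 2, productMass (bernoulliMass p) v * (if x ⬝ᵥ v = 0 then 1 else ε)
      = columnFactor ε p (hammingNorm x) := by
  simp only [ite_eq_zero_eq_paritySign, mul_add, sum_add_distrib, mul_left_comm _ ((1 - ε) / 2),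
    ← sum_mul, ← mul_sum, sum_productMass (sum_bernoulliMass p),
    sum_productMass_mul_paritySign_dotProduct, columnFactor, one_mul]

lemma sum_productMass_mul_pow_hammingNorm_vecMul (ε p : ℝ) (x : n → ZMod 2) :
    ∑ B : m → n → ZMod 2, productMass (productMass (bernoulliMass p)) B *
        ε ^ hammingNorm (x ᵥ* (of B)ᵀ)
      = columnFactor ε p (hammingNorm x) ^ Fintype.card m := by
  have h (B : m → n → ZMod 2) :
      ε ^ hammingNorm (x ᵥ* (of B)ᵀ) = ∏ j, if x ⬝ᵥ B j = 0 then 1 else ε := by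
    rw [pow_hammingNorm, vecMul_transpose]
    simp [mulVec, dotProduct_comm]
  simp only [h]
  rw [sum_productMass_mul_prod _ fun _ v => if x ⬝ᵥ v = 0 then 1 else ε]
  simp only [sum_productMass_mul_ite_dotProduct, prod_const, card_univ]

lemma sum_productMass_mul_card_ne_zero (p : ℝ) :
    ∑ B : m → n → ZMod 2, productMass (productMass (bernoulliMass p)) B *
        (#{ij : n × m | B ij.2 ij.1 ≠ 0} : ℝ)
      = p * (Fintype.card n * Fintype.card m) := by
  have entry (ij : n × m) : ∑ B : m → n → ZMod 2, productMass (productMass (bernoulliMass p)) B *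
      (if B ij.2 ij.1 ≠ 0 then 1 else 0 : ℝ) = p := by
    rw [sum_productMass_mul_apply (sum_productMass (sum_bernoulliMass p)) ij.2
      (fun v => if v ij.1 ≠ 0 then 1 else 0),
      sum_productMass_mul_apply (sum_bernoulliMass p) ij.1 (fun b => if b ≠ 0 then 1 else 0)]
    simp [bernoulliMass, sum_zmod_two]
  simp only [card_filter, Nat.cast_sum, Nat.cast_ite, Nat.cast_one, Nat.cast_zero, mul_sum]
  rw [sum_comm]
  simp only [entry, sum_const, card_univ, Fintype.card_prod, nsmul_eq_mul, Nat.cast_mul]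
  ring

end RandomColumns

section Erasure

variable {n m : Type*} [Fintype n] [Fintype m] {ε : ℝ}

lemma erasureProb_nonneg (hε0 : 0 ≤ ε) (hε1 : ε ≤ 1) (E : Finset m → Prop) :
    0 ≤ erasureProb ε E :=
  sum_nonneg fun S _ => by
    split_ifs
    exacts [mul_nonneg (pow_nonneg hε0 _) (pow_nonneg (sub_nonneg.2 hε1) _), le_rfl]

lemma erasureProb_exists_le_sum (hε0 : 0 ≤ ε) (hε1 : ε ≤ 1) {κ : Type*} [Fintype κ] (P : κ → Prop)
    [DecidablePred P] (E : κ → Finset m → Prop) :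
    erasureProb ε (fun S => ∃ x, P x ∧ E x S) ≤ ∑ x ∈ {x | P x}, erasureProb ε (E x) := by
  unfold erasureProb
  rw [sum_comm]
  refine sum_le_sum fun S _ => ?_
  have hw : 0 ≤ ε ^ #S * (1 - ε) ^ (Fintype.card m - #S) :=
    mul_nonneg (pow_nonneg hε0 _) (pow_nonneg (sub_nonneg.2 hε1) _)
  have hterm (x : κ) : 0 ≤ if E x S then ε ^ #S * (1 - ε) ^ (Fintype.card m - #S) else 0 := by
    split_ifs <;> simp [hw]
  split_ifs with h
  · obtain ⟨x, hx, hE⟩ := h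
    calc ε ^ #S * (1 - ε) ^ (Fintype.card m - #S)
        = if E x S then ε ^ #S * (1 - ε) ^ (Fintype.card m - #S) else 0 := (if_pos hE).symm
      _ ≤ _ := single_le_sum (fun x _ => hterm x) (mem_filter.2 ⟨mem_univ x, hx⟩)
  · exact sum_nonneg fun x _ => hterm x

lemma erasureProb_superset (ε : ℝ) (T : Finset m) : erasureProb ε (T ⊆ ·) = ε ^ #T := by
  have hprod : ∏ i, (ε + if i ∈ T then 0 else 1 - ε) = ε ^ #T := by
    calc ∏ i, (ε + if i ∈ T then 0 else 1 - ε) = ∏ i, if i ∈ T then ε else 1 :=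
          prod_congr rfl fun i _ => by split_ifs <;> ring
      _ = ε ^ #T := by rw [prod_ite_mem, univ_inter, prod_const]
  rw [← hprod, prod_add, powerset_univ, erasureProb]
  refine sum_congr rfl fun S _ => ?_
  rw [prod_const]
  by_cases hTS : T ⊆ S
  · rw [if_pos hTS, prod_congr rfl fun i hi => if_neg fun hiT => (mem_sdiff.1 hi).2 (hTS hiT),
      prod_const, card_univ_sdiff]
  · obtain ⟨i, hiT, hiS⟩ := not_subset.1 hTS
    rw [if_neg hTS, Finset.prod_eq_zero (f := fun i => if i ∈ T then (0 : ℝ) else 1 - ε)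
      (mem_sdiff.2 ⟨mem_univ i, hiS⟩) (if_pos hiT), mul_zero]

lemma confused_zero_iff {G : Matrix n m (ZMod 2)} {x : n → ZMod 2} {S : Finset m} :
    Confused G x 0 S ↔ ({j | (x ᵥ* G) j ≠ 0} : Finset m) ⊆ S := by
  simp only [Confused, zero_vecMul, Pi.zero_apply, subset_iff, mem_filter, mem_univ, true_and]
  exact forall_congr' fun j => not_imp_comm

lemma erasureProb_confused_zero (ε : ℝ) (G : Matrix n m (ZMod 2)) (x : n → ZMod 2) :
    erasureProb ε (Confused G x 0) = ε ^ hammingNorm (x ᵥ* G) := by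
  rw [show Confused G x 0 = (({j | (x ᵥ* G) j ≠ 0} : Finset m) ⊆ ·) from
    funext fun S => propext confused_zero_iff, erasureProb_superset]
  rfl

lemma hammingNorm_sumElim {ι κ β : Type*} [Fintype ι] [Fintype κ] [DecidableEq β] [Zero β]
    (f : ι → β) (g : κ → β) : hammingNorm (Sum.elim f g) = hammingNorm f + hammingNorm g := by
  simp only [hammingNorm, card_filter, Fintype.sum_sum_type, Sum.elim_inl, Sum.elim_inr]
  rfl

lemma erasureProb_exists_confused_fromCols_one_le [DecidableEq n] (hε0 : 0 ≤ ε) (hε1 : ε ≤ 1)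
    (A : Matrix n m (ZMod 2)) :
    erasureProb ε
        (fun S => ∃ x : n → ZMod 2, x ≠ 0 ∧ Confused (fromCols (1 : Matrix n n (ZMod 2)) A) x 0 S)
      ≤ ∑ x ∈ {x : n → ZMod 2 | x ≠ 0}, ε ^ hammingNorm x * ε ^ hammingNorm (x ᵥ* A) := by
  refine (erasureProb_exists_le_sum hε0 hε1 _ _).trans_eq (sum_congr rfl fun x _ => ?_)
  rw [erasureProb_confused_zero, vecMul_fromCols, vecMul_one, hammingNorm_sumElim, pow_add]

end Erasure

section Counting

variable {n : Type*} [Fintype n] [DecidableEq n]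

lemma card_filter_hammingNorm_eq (w : ℕ) :
    #{x : n → ZMod 2 | hammingNorm x = w} = (Fintype.card n).choose w := by
  rw [← card_univ, ← card_powersetCard]
  refine card_nbij' (fun x => ({i | x i ≠ 0} : Finset n)) (fun S i => if i ∈ S then 1 else 0)
    ?_ ?_ ?_ ?_
  · intro x hx
    simpa [mem_powersetCard, hammingNorm] using hx
  · intro S hS
    simpa [mem_powersetCard, hammingNorm] using hS
  · intro x _
    funext i
    rcases zmod_two_eq_zero_or_eq_one (x i) with h | h <;> simp [h]
  · intro S _
    ext i
    simp

lemma sum_ne_zero_apply_hammingNorm {M : Type*} [AddCommMonoid M] (F : ℕ → M) :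
    ∑ x ∈ {x : n → ZMod 2 | x ≠ 0}, F (hammingNorm x)
      = ∑ w ∈ Icc 1 (Fintype.card n), (Fintype.card n).choose w • F w := by
  rw [← sum_fiberwise_of_maps_to (g := hammingNorm) (t := Icc 1 (Fintype.card n)) fun x hx =>
    mem_Icc.2 ⟨hammingNorm_pos_iff.2 (mem_filter.1 hx).2, hammingNorm_le_card_fintype⟩]
  refine sum_congr rfl fun w hw => ?_
  have hfiber : ({x ∈ {x : n → ZMod 2 | x ≠ 0} | hammingNorm x = w} : Finset (n → ZMod 2))
      = ({x | hammingNorm x = w} : Finset (n → ZMod 2)) := by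
    ext x
    simp only [mem_filter, mem_univ, true_and, and_iff_right_iff_imp]
    rintro rfl
    exact hammingNorm_ne_zero_iff.1 (by have := (mem_Icc.1 hw).1; omega)
  rw [sum_congr rfl fun x hx => congrArg F (mem_filter.1 hx).2, sum_const, hfiber,
    card_filter_hammingNorm_eq]

end Counting

section Estimates

open Real

variable {ε p t : ℝ}

lemma one_sub_pow_le_exp_neg_mul {x : ℝ} (hx : x ≤ 1) (w : ℕ) :
    (1 - x) ^ w ≤ exp (-(w * x)) :=
  calc (1 - x) ^ w ≤ exp (-x) ^ w := pow_le_pow_left₀ (sub_nonneg.2 hx) (one_sub_le_exp_neg x) w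
    _ = exp (-(w * x)) := by rw [← exp_nat_mul]; ring_nf

lemma exp_neg_le_one_sub_add_sq_div_two {x : ℝ} (hx : 0 ≤ x) : exp (-x) ≤ 1 - x + x ^ 2 / 2 := by
  have hq : 0 ≤ 1 - x + x ^ 2 / 2 := by nlinarith [sq_nonneg (x - 1)]
  -- `(1 + x + x²/2) (1 - x + x²/2) = 1 + x⁴/4`
  have h : 1 ≤ exp x * (1 - x + x ^ 2 / 2) := by
    nlinarith [mul_le_mul_of_nonneg_right (quadratic_le_exp_of_nonneg hx) hq, sq_nonneg (x ^ 2)]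
  calc exp (-x) ≤ exp (-x) * (exp x * (1 - x + x ^ 2 / 2)) :=
        le_mul_of_one_le_right (exp_pos _).le h
    _ = 1 - x + x ^ 2 / 2 := by rw [← mul_assoc, ← exp_add, neg_add_cancel, exp_zero, one_mul]

lemma columnFactor_nonneg (hε0 : 0 ≤ ε) (hε1 : ε ≤ 1) (hp : 2 * p ≤ 1) (w : ℕ) :
    0 ≤ columnFactor ε p w := by
  unfold columnFactor
  have := pow_nonneg (sub_nonneg.2 hp) w
  positivity

lemma columnFactor_le_exp (hε1 : ε ≤ 1) (hp0 : 0 ≤ p) (hp : 2 * p ≤ 1) {w : ℕ} (hw : p * w ≤ t) :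
    columnFactor ε p w ≤ exp (-((1 - ε) * (1 - t) * (p * w))) := by
  have hpw : 0 ≤ p * w := by positivity
  have hpow : (1 - 2 * p) ^ w ≤ 1 - 2 * (p * w) + (2 * (p * w)) ^ 2 / 2 :=
    calc (1 - 2 * p) ^ w ≤ exp (-(w * (2 * p))) := one_sub_pow_le_exp_neg_mul hp w
      _ = exp (-(2 * (p * w))) := by ring_nf
      _ ≤ _ := exp_neg_le_one_sub_add_sq_div_two (by positivity)
  calc columnFactor ε p w ≤ 1 - (1 - ε) * (1 - t) * (p * w) := by
        unfold columnFactor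
        nlinarith [mul_le_mul_of_nonneg_left hpow (by linarith : (0 : ℝ) ≤ (1 - ε) / 2),
          mul_nonneg (mul_nonneg (sub_nonneg.2 hε1) hpw) (sub_nonneg.2 hw)]
    _ ≤ _ := one_sub_le_exp_neg _

lemma columnFactor_le_of_le_mul (hε1 : ε ≤ 1) (hp : 2 * p ≤ 1) {w : ℕ} (hw : t ≤ p * w) :
    columnFactor ε p w ≤ 1 - (1 - ε) * (1 - exp (-(2 * t))) / 2 := by
  have hpow : (1 - 2 * p) ^ w ≤ exp (-(2 * t)) :=
    calc (1 - 2 * p) ^ w ≤ exp (-(w * (2 * p))) := one_sub_pow_le_exp_neg_mul hp w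
      _ ≤ exp (-(2 * t)) := exp_le_exp.2 (by nlinarith)
  unfold columnFactor
  nlinarith [mul_le_mul_of_nonneg_left hpow (by linarith : (0 : ℝ) ≤ (1 - ε) / 2)]

end Estimates

section WeightSums

open Real

variable {N : ℕ} {c ε p t : ℝ}

lemma choose_mul_columnFactor_pow_le (hN : 0 < N) (hε0 : 0 ≤ ε) (hε1 : ε ≤ 1) (hp0 : 0 ≤ p)
    (hp : 2 * p ≤ 1) (hpN : p * N = c * log N) {w : ℕ} (hw : p * w ≤ t) :
    N.choose w * (ε ^ w * columnFactor ε p w ^ N)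
      ≤ (ε * (N : ℝ) ^ (1 - c * (1 - ε) * (1 - t))) ^ w := by
  have hN' : (0 : ℝ) < N := by exact_mod_cast hN
  have hcol : columnFactor ε p w ^ N ≤ ((N : ℝ) ^ (-(c * (1 - ε) * (1 - t)))) ^ w :=
    calc columnFactor ε p w ^ N ≤ exp (-((1 - ε) * (1 - t) * (p * w))) ^ N :=
          pow_le_pow_left₀ (columnFactor_nonneg hε0 hε1 hp w) (columnFactor_le_exp hε1 hp0 hp hw) N
      _ = ((N : ℝ) ^ (-(c * (1 - ε) * (1 - t)))) ^ w := by
          rw [← exp_nat_mul, rpow_def_of_pos hN', ← exp_nat_mul]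
          congr 1
          linear_combination (-(1 - ε) * (1 - t) * w) * hpN
  calc (N.choose w : ℝ) * (ε ^ w * columnFactor ε p w ^ N)
      ≤ (N : ℝ) ^ w * (ε ^ w * ((N : ℝ) ^ (-(c * (1 - ε) * (1 - t)))) ^ w) :=
        mul_le_mul (by exact_mod_cast Nat.choose_le_pow N w)
          (mul_le_mul_of_nonneg_left hcol (pow_nonneg hε0 w))
          (mul_nonneg (pow_nonneg hε0 w) (pow_nonneg (columnFactor_nonneg hε0 hε1 hp w) N))
          (by positivity)
    _ = _ := by
        rw [rpow_sub hN', rpow_one, rpow_neg hN'.le, div_eq_mul_inv, ← mul_pow, ← mul_pow]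
        ring

lemma card_filter_mul_lt_le (hp : 0 < p) (ht : 0 ≤ t) (N : ℕ) :
    (#((Icc 1 N).filter (fun w : ℕ => p * w < t)) : ℝ) ≤ t / p := by
  have hsub : (Icc 1 N).filter (fun w : ℕ => p * w < t) ⊆ Icc 1 ⌊t / p⌋₊ := fun w hw => by
    obtain ⟨hw, hwt⟩ := mem_filter.1 hw
    exact mem_Icc.2 ⟨(mem_Icc.1 hw).1, Nat.le_floor ((le_div_iff₀' hp).2 hwt.le)⟩
  calc (#((Icc 1 N).filter (fun w : ℕ => p * w < t)) : ℝ) ≤ ⌊t / p⌋₊ := by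
        exact_mod_cast (card_le_card hsub).trans (by simp)
    _ ≤ t / p := Nat.floor_le (by positivity)

lemma sum_filter_lt_choose_mul_columnFactor_pow_le (hN : 0 < N) (hε0 : 0 ≤ ε) (hε1 : ε ≤ 1)
    (hp0 : 0 < p) (hp : 2 * p ≤ 1) (hpN : p * N = c * log N) (ht : 0 ≤ t)
    (hX : ε * (N : ℝ) ^ (1 - c * (1 - ε) * (1 - t)) ≤ 1) :
    ∑ w ∈ (Icc 1 N).filter (fun w : ℕ => p * w < t), N.choose w * (ε ^ w * columnFactor ε p w ^ N)
      ≤ t / p * (ε * (N : ℝ) ^ (1 - c * (1 - ε) * (1 - t))) := by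
  set X := ε * (N : ℝ) ^ (1 - c * (1 - ε) * (1 - t))
  have hX0 : 0 ≤ X := by positivity
  calc _ ≤ ∑ w ∈ (Icc 1 N).filter (fun w : ℕ => p * w < t), X := sum_le_sum fun w hw => by
          obtain ⟨hw1, hwt⟩ := mem_filter.1 hw
          exact (choose_mul_columnFactor_pow_le hN hε0 hε1 hp0.le hp hpN hwt.le).trans
            (pow_le_of_le_one hX0 hX (by linarith [(mem_Icc.1 hw1).1]))
    _ = #((Icc 1 N).filter (fun w : ℕ => p * w < t)) * X := by rw [sum_const, nsmul_eq_mul]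
    _ ≤ t / p * X := mul_le_mul_of_nonneg_right (card_filter_mul_lt_le hp0 ht N) hX0

lemma sum_filter_not_lt_choose_mul_columnFactor_pow_le (hε0 : 0 ≤ ε) (hε1 : ε ≤ 1)
    (hp : 2 * p ≤ 1) (ht : 0 ≤ t) (hεA : ε ≤ (1 - ε) * (1 - exp (-(2 * t))) / 2 / 2) :
    ∑ w ∈ (Icc 1 N).filter (fun w : ℕ => ¬ p * w < t), N.choose w * (ε ^ w * columnFactor ε p w ^ N)
      ≤ (1 - (1 - ε) * (1 - exp (-(2 * t))) / 2 / 2) ^ N := by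
  set A := (1 - ε) * (1 - exp (-(2 * t))) / 2
  have hE : exp (-(2 * t)) ≤ 1 := exp_le_one_iff.2 (by linarith)
  have hA0 : 0 ≤ A := by have := exp_pos (-(2 * t)); positivity
  have hA1 : A ≤ 1 / 2 := by
    simp only [A]
    nlinarith [exp_pos (-(2 * t)), mul_le_mul_of_nonneg_left hE hε0]
  calc _ ≤ ∑ w ∈ (Icc 1 N).filter (fun w : ℕ => ¬ p * w < t), N.choose w * (ε ^ w * (1 - A) ^ N) :=
        sum_le_sum fun w hw => by
          have hcol := columnFactor_le_of_le_mul hε1 hp (not_lt.1 (mem_filter.1 hw).2)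
          gcongr
          exact columnFactor_nonneg hε0 hε1 hp w
    _ ≤ ∑ w ∈ range (N + 1), N.choose w * (ε ^ w * (1 - A) ^ N) :=
        sum_le_sum_of_subset_of_nonneg
          (fun w hw => mem_range.2 (Nat.lt_succ_of_le (mem_Icc.1 (mem_filter.1 hw).1).2))
          fun w _ _ => by have : 0 ≤ 1 - A := by linarith
                          positivity
    _ = ((ε + 1) * (1 - A)) ^ N := by
        rw [mul_pow, add_pow, sum_mul]
        refine sum_congr rfl fun w _ => ?_
        ring
    _ ≤ (1 - A / 2) ^ N := pow_le_pow_left₀ (by nlinarith) (by nlinarith) N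

end WeightSums

lemma sum_productMass_mul_erasureProb_le {n m : Type*} [Fintype n] [DecidableEq n] [Fintype m]
    [DecidableEq m] {ε p : ℝ}
    (hε0 : 0 ≤ ε) (hε1 : ε ≤ 1) (hp0 : 0 ≤ p) (hp1 : p ≤ 1) :
    ∑ B : m → n → ZMod 2, productMass (productMass (bernoulliMass p)) B *
        erasureProb ε (fun S => ∃ x : n → ZMod 2, x ≠ 0 ∧
          Confused (fromCols (1 : Matrix n n (ZMod 2)) (of B)ᵀ) x 0 S)
      ≤ ∑ w ∈ Icc 1 (Fintype.card n),
          (Fintype.card n).choose w * (ε ^ w * columnFactor ε p w ^ Fintype.card m) := by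
  calc _ ≤ ∑ B : m → n → ZMod 2, productMass (productMass (bernoulliMass p)) B *
          ∑ x ∈ {x : n → ZMod 2 | x ≠ 0}, ε ^ hammingNorm x * ε ^ hammingNorm (x ᵥ* (of B)ᵀ) :=
        sum_le_sum fun B _ => mul_le_mul_of_nonneg_left
          (erasureProb_exists_confused_fromCols_one_le hε0 hε1 _)
          (productMass_nonneg (productMass_nonneg (bernoulliMass_nonneg hp0 hp1)) B)
    _ = ∑ x ∈ {x : n → ZMod 2 | x ≠ 0},
          ε ^ hammingNorm x * columnFactor ε p (hammingNorm x) ^ Fintype.card m := by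
        simp only [mul_sum]
        rw [sum_comm]
        refine sum_congr rfl fun x _ => ?_
        simp only [mul_left_comm _ (ε ^ hammingNorm x), ← mul_sum,
          sum_productMass_mul_pow_hammingNorm_vecMul]
    _ = _ := by
        rw [sum_ne_zero_apply_hammingNorm fun w => ε ^ w * columnFactor ε p w ^ Fintype.card m]
        simp only [nsmul_eq_mul]

open Real in
lemma sum_choose_mul_columnFactor_pow_le {N : ℕ} {c δ ε : ℝ} (hN : 2 ≤ N) (hc : 0 < c)
    (hp : c * log N / N ≤ 1 / 2) (hδ : 0 < δ) (hε0 : 0 ≤ ε) (hε1 : ε ≤ 1)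
    (hεA : ε ≤ ((1 - ε) * (1 - exp (-(2 * c * δ))) / 2) / 2)
    (hεN : exp 1 * ε * (N : ℝ) ^ ((1 : ℝ) - c * (1 - ε) * (1 - c * δ)) ≤ 1) :
    ∑ w ∈ Icc 1 N, N.choose w * (ε ^ w * columnFactor ε (c * log N / N) w ^ N)
      ≤ (1 - ((1 - ε) * (1 - exp (-(2 * c * δ))) / 2) / 2) ^ N
          + δ * exp 1 * ε * (N : ℝ) ^ ((2 : ℝ) - c * (1 - ε) * (1 - c * δ)) / log N := by
  have hN0 : (0 : ℝ) < N := by positivity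
  have hlog : 0 < log N := log_pos (by exact_mod_cast hN)
  set p := c * log N / N
  have hp0 : 0 < p := by positivity
  have hpN : p * N = c * log N := div_mul_cancel₀ _ hN0.ne'
  have hX : ε * (N : ℝ) ^ (1 - c * (1 - ε) * (1 - c * δ)) ≤ 1 :=
    (le_mul_of_one_le_left (by positivity) (one_le_exp zero_le_one)).trans (by linarith)
  have hsmall := sum_filter_lt_choose_mul_columnFactor_pow_le (by omega) hε0 hε1 hp0 (by linarith)
    hpN (by positivity) hX
  have hlarge := sum_filter_not_lt_choose_mul_columnFactor_pow_le (N := N) hε0 hε1 (p := p)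
    (by linarith) (by positivity : 0 ≤ c * δ) (by rwa [← mul_assoc])
  rw [← mul_assoc] at hlarge
  rw [← sum_filter_add_sum_filter_not (Icc 1 N) (fun w : ℕ => p * w < c * δ)]
  rw [add_comm]
  refine add_le_add hlarge (hsmall.trans ?_)
  have hpow : (N : ℝ) ^ ((2 : ℝ) - c * (1 - ε) * (1 - c * δ))
      = N * (N : ℝ) ^ (1 - c * (1 - ε) * (1 - c * δ)) := by
    rw [show (2 : ℝ) - c * (1 - ε) * (1 - c * δ) = 1 + (1 - c * (1 - ε) * (1 - c * δ)) by ring,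
      rpow_add hN0, rpow_one]
  calc c * δ / p * (ε * (N : ℝ) ^ (1 - c * (1 - ε) * (1 - c * δ)))
      = δ * ε * (N * (N : ℝ) ^ (1 - c * (1 - ε) * (1 - c * δ))) / log N * 1 := by
        simp only [p]
        field_simp
    _ ≤ δ * ε * (N * (N : ℝ) ^ (1 - c * (1 - ε) * (1 - c * δ))) / log N * exp 1 :=
        mul_le_mul_of_nonneg_left (one_le_exp zero_le_one) (by positivity)
    _ = _ := by rw [hpow]; ring

section Averaging

variable {Ω : Type*} [Fintype Ω] {W X Y : Ω → ℝ}

lemma half_le_sum_filter_le_two_mul (hW : ∀ ω, 0 ≤ W ω) (hW1 : ∑ ω, W ω = 1)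
    (hX : ∀ ω, 0 ≤ X ω) {K : ℝ} (hK : 0 < K) (hXK : ∑ ω, W ω * X ω ≤ K) :
    1 / 2 ≤ ∑ ω ∈ {ω | X ω ≤ 2 * K}, W ω := by
  have hbad : (∑ ω ∈ {ω | ¬ X ω ≤ 2 * K}, W ω) * (2 * K) ≤ K :=
    calc _ = ∑ ω ∈ {ω | ¬ X ω ≤ 2 * K}, W ω * (2 * K) := sum_mul ..
      _ ≤ ∑ ω ∈ {ω | ¬ X ω ≤ 2 * K}, W ω * X ω := sum_le_sum fun ω hω =>
          mul_le_mul_of_nonneg_left (not_le.1 (mem_filter.1 hω).2).le (hW ω)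
      _ ≤ ∑ ω, W ω * X ω := sum_le_sum_of_subset_of_nonneg (subset_univ _) fun ω _ _ =>
          mul_nonneg (hW ω) (hX ω)
      _ ≤ K := hXK
  have hsplit := sum_filter_add_sum_filter_not univ (fun ω => X ω ≤ 2 * K) W
  rw [hW1] at hsplit
  nlinarith

lemma exists_mem_le_two_mul_of_half_le_sum (hW : ∀ ω, 0 ≤ W ω) (hY : ∀ ω, 0 ≤ Y ω)
    {s : Finset Ω} (hs : 1 / 2 ≤ ∑ ω ∈ s, W ω) {B : ℝ} (hYB : ∑ ω, W ω * Y ω ≤ B) :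
    ∃ ω ∈ s, Y ω ≤ 2 * B := by
  by_contra! h
  have hB : 0 ≤ B := (sum_nonneg fun ω _ => mul_nonneg (hW ω) (hY ω)).trans hYB
  obtain ⟨ω₀, hω₀, hWω₀⟩ := exists_lt_of_sum_lt (f := fun _ => (0 : ℝ)) (g := W) (s := s)
    (by rw [sum_const_zero]; linarith)
  have hlt : ∑ ω ∈ s, W ω * (2 * B) < ∑ ω ∈ s, W ω * Y ω :=
    sum_lt_sum (fun ω hω => mul_le_mul_of_nonneg_left (h ω hω).le (hW ω))
      ⟨ω₀, hω₀, mul_lt_mul_of_pos_left (h ω₀ hω₀) hWω₀⟩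
  have hsub : ∑ ω ∈ s, W ω * Y ω ≤ ∑ ω, W ω * Y ω :=
    sum_le_sum_of_subset_of_nonneg (subset_univ s) fun ω _ _ => mul_nonneg (hW ω) (hY ω)
  rw [← sum_mul] at hlt
  nlinarith

lemma exists_le_two_mul_and_le_two_mul (hW : ∀ ω, 0 ≤ W ω) (hW1 : ∑ ω, W ω = 1)
    (hX : ∀ ω, 0 ≤ X ω) (hY : ∀ ω, 0 ≤ Y ω) {K B : ℝ} (hK : 0 < K)
    (hXK : ∑ ω, W ω * X ω ≤ K) (hYB : ∑ ω, W ω * Y ω ≤ B) :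
    ∃ ω, X ω ≤ 2 * K ∧ Y ω ≤ 2 * B := by
  obtain ⟨ω, hω, hYω⟩ := exists_mem_le_two_mul_of_half_le_sum hW hY
    (half_le_sum_filter_le_two_mul hW hW1 hX hK hXK) hYB
  exact ⟨ω, (mem_filter.1 hω).2, hYω⟩

end Averaging

/-- **Existence of sparse capacity-achieving rate-1/2 erasure codes (Corollary 6).**
With `p = c ln N / N ≤ 1/2`, `A_δ = (1−ε)(1−e^{−2cδ})/2`, `a = c(1−ε)(1−cδ)`,
`0 < ε ≤ A_δ/2` and `e ε N^{1−a} ≤ 1`, there is an `N×N` matrix `A` over `𝔽₂`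
with at most `2cN ln N` nonzero entries such that the block-error probability
of the systematic code `[I | A]` over a BEC(ε) is at most
`2[(1 − A_δ/2)^N + δ e ε N^{2−a}/ln N]`. -/
theorem stmt16 (N : ℕ) (hN : 2 ≤ N) (c : ℝ) (hc : 0 < c)
    (hp : c * Real.log N / N ≤ 1 / 2) (δ : ℝ) (hδ : 0 < δ)
    (ε : ℝ) (hε0 : 0 < ε)
    (hεA : ε ≤ ((1 - ε) * (1 - Real.exp (-(2 * c * δ))) / 2) / 2)
    (hεN : Real.exp 1 * ε * (N : ℝ) ^ ((1 : ℝ) - c * (1 - ε) * (1 - c * δ)) ≤ 1) :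
    ∃ A : Matrix (Fin N) (Fin N) (ZMod 2),
      ((Finset.univ : Finset (Fin N × Fin N)).filter
          (fun ij => A ij.1 ij.2 ≠ 0)).card ≤ 2 * c * N * Real.log N ∧
      erasureProb ε (fun S : Finset (Fin N ⊕ Fin N) =>
          ∃ x : Fin N → ZMod 2, x ≠ 0 ∧ Confused (Matrix.fromCols 1 A) x 0 S)
        ≤ 2 * ((1 - ((1 - ε) * (1 - Real.exp (-(2 * c * δ))) / 2) / 2) ^ N
            + δ * Real.exp 1 * ε *
                (N : ℝ) ^ ((2 : ℝ) - c * (1 - ε) * (1 - c * δ)) / Real.log N) := by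
  have hlog : 0 < Real.log N := Real.log_pos (by exact_mod_cast hN)
  have hp0 : 0 < c * Real.log N / N := by positivity
  have hε1 : ε ≤ 1 := by nlinarith [Real.exp_lt_one_iff.2 (by nlinarith : -(2 * c * δ) < 0)]
  have herr := (sum_productMass_mul_erasureProb_le (n := Fin N) (m := Fin N) hε0.le hε1 hp0.le
    (by linarith)).trans (by simpa only [Fintype.card_fin] using
      sum_choose_mul_columnFactor_pow_le hN hc hp hδ hε0.le hε1 hεA hεN)
  obtain ⟨B, hB_ones, hB_err⟩ := exists_le_two_mul_and_le_two_mul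
    (productMass_nonneg (productMass_nonneg (bernoulliMass_nonneg hp0.le (by linarith))))
    (sum_productMass (sum_productMass (sum_bernoulliMass _))) (fun _ => Nat.cast_nonneg _)
    (fun _ => erasureProb_nonneg hε0.le hε1 _) (K := c * N * Real.log N) (by positivity)
    ((sum_productMass_mul_card_ne_zero _).le.trans_eq (by simp only [Fintype.card_fin]; field_simp))
    herr
  exact ⟨(of B)ᵀ, hB_ones.trans_eq (by ring), hB_err⟩
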